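/- arXiv:1410.5545 — 2 statements merged into one kernel-verified Lean document; each statement's English description precedes it below -/
import Mathlib

section
/- Fix r > 0 and the setup of Φ[a,b,c,d]. For real numbers θ₁, θ₂, θ₃, θ₄ and α_j = r e^{iθ_j}, the 4×4 matrix M whose j-th row is y_{α_j}ᵀ satisfies det(M) = K · e^{i(θ₁+θ₂+θ₃+θ₄)/2} · ∏_{1≤i<j≤4} sin((θ_i - θ_j)/2), where K = 64 a c √(acd) r⁴ (c+d)(c + d r²)(c(c+d) + d(abc + d)r²)/(ab-1)². -/
/-!
On the circle `α = r z`, `|z| = 1`, one has `ᾱ = r z⁻¹` and `‖α‖² = r²`, so `z • y_α` is a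
polynomial of degree at most three in `z`. The matrix of the theorem therefore factors as
`diag (z_j⁻¹) * V(z) * C` with `V` the Vandermonde matrix and `C` a constant coefficient matrix,
whose determinant is `-c g r⁴ (e + f r²) (h + k r² - c d)`; the definitions of `e, f, h, k` turn
this into the stated constant. For `z_j = e^{iθ_j}` each Vandermonde factor is
`z_j - z_i = -2i e^{i(θ_i + θ_j)/2} sin ((θ_i - θ_j)/2)`, and together with `∏ z_j⁻¹` the
exponentials collapse to `e^{i(θ₁ + θ₂ + θ₃ + θ₄)/2}`.
-/

open Complex Finset

theorem Fin.prod_prod_Ioi_four {M : Type*} [CommMonoid M] (f : Fin 4 → Fin 4 → M) :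
    ∏ i, ∏ j ∈ Ioi i, f i j = f 0 1 * f 0 2 * f 0 3 * f 1 2 * f 1 3 * f 2 3 := by
  simp only [Fin.prod_univ_succ, Fin.prod_Ioi_zero, Fin.prod_Ioi_succ, Fin.prod_univ_zero,
    mul_one]
  simp only [mul_assoc]
  rfl

theorem det_of_mul_sum_pow_mul {R : Type*} [CommRing R] {n : ℕ} (w v : Fin n → R)
    (C : Matrix (Fin n) (Fin n) R) :
    (Matrix.of fun i j => w i * ∑ k : Fin n, v i ^ (k : ℕ) * C k j).det =
      (∏ i, w i) * (∏ i, ∏ j ∈ Ioi i, (v j - v i)) * C.det := by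
  have hfactor : (Matrix.of fun i j => w i * ∑ k : Fin n, v i ^ (k : ℕ) * C k j) =
      Matrix.diagonal w * Matrix.vandermonde v * C := by
    ext i j
    rw [Matrix.mul_assoc, Matrix.diagonal_mul]
    simp [Matrix.mul_apply]
  rw [hfactor, Matrix.det_mul, Matrix.det_mul, Matrix.det_diagonal, Matrix.det_vandermonde]

theorem exp_I_mul_sub_exp_I_mul (x y : ℝ) :
    cexp (I * y) - cexp (I * x) =
      -2 * I * (cexp (I * (x / 2 : ℝ)) * cexp (I * (y / 2 : ℝ))) * Real.sin ((x - y) / 2) := by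
  have hy : cexp (I * y) =
      cexp (I * (x / 2 : ℝ)) * cexp (I * (y / 2 : ℝ)) * cexp (-(((x - y) / 2 : ℝ) : ℂ) * I) := by
    rw [← exp_add, ← exp_add]; push_cast; ring_nf
  have hx : cexp (I * x) =
      cexp (I * (x / 2 : ℝ)) * cexp (I * (y / 2 : ℝ)) * cexp ((((x - y) / 2 : ℝ) : ℂ) * I) := by
    rw [← exp_add, ← exp_add]; push_cast; ring_nf
  rw [ofReal_sin, sin, hy, hx]
  ring_nf
  rw [I_sq]
  ring

theorem prod_inv_mul_prod_sub_exp_I_mul (θ : Fin 4 → ℝ) :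
    (∏ i, (cexp (I * θ i))⁻¹) * ∏ i, ∏ j ∈ Ioi i, (cexp (I * θ j) - cexp (I * θ i)) =
      -64 * cexp (I * ((θ 0 + θ 1 + θ 2 + θ 3) / 2 : ℝ)) *
        ((Real.sin ((θ 0 - θ 1) / 2) : ℂ) * (Real.sin ((θ 0 - θ 2) / 2) : ℂ) *
          (Real.sin ((θ 0 - θ 3) / 2) : ℂ) * (Real.sin ((θ 1 - θ 2) / 2) : ℂ) *
          (Real.sin ((θ 1 - θ 3) / 2) : ℂ) * (Real.sin ((θ 2 - θ 3) / 2) : ℂ)) := by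
  set u : Fin 4 → ℂ := fun i => cexp (I * (θ i / 2 : ℝ))
  have hdiff : ∀ i j, cexp (I * θ j) - cexp (I * θ i) =
      -2 * I * (u i * u j) * Real.sin ((θ i - θ j) / 2) :=
    fun i j => exp_I_mul_sub_exp_I_mul _ _
  have hsq : ∀ i, cexp (I * θ i) = u i ^ 2 := fun i => by
    rw [← exp_nat_mul]; push_cast; ring_nf
  have hsum : cexp (I * ((θ 0 + θ 1 + θ 2 + θ 3) / 2 : ℝ)) = u 0 * u 1 * u 2 * u 3 := by
    simp only [u, ← exp_add]; push_cast; ring_nf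
  rw [Fin.prod_prod_Ioi_four, Fin.prod_univ_four]
  simp only [hdiff]
  simp only [hsq, hsum]
  field_simp
  rw [show I ^ 6 = (I ^ 2) ^ 3 by ring, I_sq]
  ring

noncomputable def yVec (c d e f g h k : ℝ) (α : ℂ) : Fin 4 → ℂ :=
  ![(g : ℂ) * α * (1 - α),
    α * ((h : ℂ) - (c : ℂ) * (d : ℂ) * (α + starRingEnd ℂ α) + (k : ℂ) * (‖α‖ : ℂ) ^ 2),
    -((e : ℂ) + (f : ℂ) * (‖α‖ : ℂ) ^ 2),
    -(starRingEnd ℂ α) * ((c : ℂ) + (d : ℂ) * α)]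

/-- Row `m` holds the coefficients of `z ^ m` in `z • yVec c d e f g h k (r * z)` for `|z| = 1`. -/
def yCoeff (c d e f g h k r : ℂ) : Matrix (Fin 4) (Fin 4) ℂ :=
  !![0, 0, 0, -(c * r);
     0, -(c * d * r ^ 2), -(e + f * r ^ 2), -(d * r ^ 2);
     g * r, r * (h + k * r ^ 2), 0, 0;
     -(g * r ^ 2), -(c * d * r ^ 2), 0, 0]

theorem yVec_ofReal_mul (c d e f g h k r : ℝ) {z : ℂ} (hz : ‖z‖ = 1) (j : Fin 4) :
    yVec c d e f g h k (r * z) j =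
      z⁻¹ * ∑ m : Fin 4, z ^ (m : ℕ) * yCoeff c d e f g h k r m j := by
  have hz0 : z ≠ 0 := norm_ne_zero_iff.mp (by simp [hz])
  have hconj : starRingEnd ℂ (r * z) = r * z⁻¹ := by
    rw [map_mul, conj_ofReal, inv_eq_conj hz]
  have habs : ((|r| : ℝ) : ℂ) ^ 2 = (r : ℂ) ^ 2 := by rw [← ofReal_pow, sq_abs, ofReal_pow]
  fin_cases j <;> simp [yVec, yCoeff, Fin.sum_univ_four, hconj, hz, habs] <;> field_simp <;> ring

theorem det_yCoeff (c d e f g h k r : ℂ) :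
    (yCoeff c d e f g h k r).det =
      -(c * g * r ^ 4 * (e + f * r ^ 2) * (h + k * r ^ 2 - c * d)) := by
  simp [yCoeff, Matrix.det_succ_row_zero, Fin.sum_univ_succ, Fin.succAbove]
  ring

theorem det_y_matrix_formula_general (a b c d e f g h k : ℝ)
    (hab : 1 < a * b)
    (hg : g = Real.sqrt (a * c * d))
    (he : e = a * (c + d) * c / (a * b - 1))
    (hf : f = a * (c + d) * d / (a * b - 1))
    (hh : h = b * e - c ^ 2) (hk : k = b * f - d ^ 2)
    (r : ℝ) (θ : Fin 4 → ℝ) :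
    let y : ℂ → Fin 4 → ℂ := fun α =>
      ![(g : ℂ) * α * (1 - α),
        α * ((h : ℂ) - (c : ℂ) * (d : ℂ) * (α + starRingEnd ℂ α) +
          (k : ℂ) * (‖α‖ : ℂ) ^ 2),
        -((e : ℂ) + (f : ℂ) * (‖α‖ : ℂ) ^ 2),
        -(starRingEnd ℂ α) * ((c : ℂ) + (d : ℂ) * α)]
    let α : Fin 4 → ℂ := fun j => (r : ℂ) * Complex.exp (Complex.I * (θ j : ℂ))
    Matrix.det (Matrix.of fun i j => y (α i) j) =
      ((64 * a * c * Real.sqrt (a * c * d) * r ^ 4 * (c + d) * (c + d * r ^ 2) *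
          (c * (c + d) + d * (a * b * c + d) * r ^ 2) / (a * b - 1) ^ 2 : ℝ) : ℂ) *
        Complex.exp (Complex.I * (((θ 0 + θ 1 + θ 2 + θ 3) / 2 : ℝ) : ℂ)) *
        ((Real.sin ((θ 0 - θ 1) / 2) : ℂ) * (Real.sin ((θ 0 - θ 2) / 2) : ℂ) *
          (Real.sin ((θ 0 - θ 3) / 2) : ℂ) * (Real.sin ((θ 1 - θ 2) / 2) : ℂ) *
          (Real.sin ((θ 1 - θ 3) / 2) : ℂ) * (Real.sin ((θ 2 - θ 3) / 2) : ℂ)) := by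
  intro y α
  have hrows : (Matrix.of fun i j => y (α i) j) = Matrix.of fun i j =>
      (cexp (I * θ i))⁻¹ * ∑ m : Fin 4, cexp (I * θ i) ^ (m : ℕ) * yCoeff c d e f g h k r m j := by
    ext i j
    exact yVec_ofReal_mul c d e f g h k r (norm_exp_I_mul_ofReal (θ i)) j
  have hscalar : 64 * a * c * Real.sqrt (a * c * d) * r ^ 4 * (c + d) * (c + d * r ^ 2) *
        (c * (c + d) + d * (a * b * c + d) * r ^ 2) / (a * b - 1) ^ 2 =
      64 * (c * g * r ^ 4 * (e + f * r ^ 2) * (h + k * r ^ 2 - c * d)) := by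
    have hD : a * b - 1 ≠ 0 := by linarith
    subst hg he hf hh hk
    field_simp
    ring
  rw [hrows, det_of_mul_sum_pow_mul, prod_inv_mul_prod_sub_exp_I_mul, det_yCoeff, hscalar]
  push_cast
  ring

/-- Determinant formula for the 4×4 matrix whose rows are `y_{α_j}` with
`α_j = r e^{iθ_j}`. -/
theorem det_y_matrix_formula (a b c d e f g h k : ℝ)
    (ha : 0 < a) (hb : 0 < b) (hc : 0 < c) (hd : 0 < d) (hab : 1 < a * b)
    (hg : g = Real.sqrt (a * c * d))
    (he : e = a * (c + d) * c / (a * b - 1))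
    (hf : f = a * (c + d) * d / (a * b - 1))
    (hh : h = b * e - c ^ 2) (hk : k = b * f - d ^ 2)
    (r : ℝ) (hr : 0 < r) (θ : Fin 4 → ℝ) :
    let y : ℂ → Fin 4 → ℂ := fun α =>
      ![(g : ℂ) * α * (1 - α),
        α * ((h : ℂ) - (c : ℂ) * (d : ℂ) * (α + starRingEnd ℂ α) +
          (k : ℂ) * (‖α‖ : ℂ) ^ 2),
        -((e : ℂ) + (f : ℂ) * (‖α‖ : ℂ) ^ 2),
        -(starRingEnd ℂ α) * ((c : ℂ) + (d : ℂ) * α)]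
    let α : Fin 4 → ℂ := fun j => (r : ℂ) * Complex.exp (Complex.I * (θ j : ℂ))
    Matrix.det (Matrix.of fun i j => y (α i) j) =
      ((64 * a * c * Real.sqrt (a * c * d) * r ^ 4 * (c + d) * (c + d * r ^ 2) *
          (c * (c + d) + d * (a * b * c + d) * r ^ 2) / (a * b - 1) ^ 2 : ℝ) : ℂ) *
        Complex.exp (Complex.I * (((θ 0 + θ 1 + θ 2 + θ 3) / 2 : ℝ) : ℂ)) *
        ((Real.sin ((θ 0 - θ 1) / 2) : ℂ) * (Real.sin ((θ 0 - θ 2) / 2) : ℂ) *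
          (Real.sin ((θ 0 - θ 3) / 2) : ℂ) * (Real.sin ((θ 1 - θ 2) / 2) : ℂ) *
          (Real.sin ((θ 1 - θ 3) / 2) : ℂ) * (Real.sin ((θ 2 - θ 3) / 2) : ℂ)) :=
  det_y_matrix_formula_general a b c d e f g h k hab hg he hf hh hk r θ
end

section
/- Fix r > 0 and the setup of Φ[a,b,c,d]. Any five product vectors x_{α₁} ⊗ y_{α₁}, ..., x_{α₅} ⊗ y_{α₅} with |α_j| = r and the α_j pairwise distinct are linearly independent in ℂ² ⊗ ℂ⁴. -/
/-!
A linear relation among the rows `x_{α_j} ⊗ y_{α_j}` is orthogonal to every column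
`j ↦ (x_{α_j} ⊗ y_{α_j})_p`, so it suffices that the columns span `ℂ⁵`. Using `|α_j| = r`, linear
combinations of the columns give the Laurent monomials `α^m`, `|m| ≤ 2`, evaluated at the `α_j`;
up to the nonzero factors `ᾱ_j²` these are the columns of the Vandermonde matrix of the five
distinct points `α_j`, which is invertible.
-/

open Submodule Set Function ComplexConjugate

theorem linearIndependent_of_span_range_swap_eq_top {K ι κ : Type*} [CommRing K] [Fintype ι]
    {v : ι → κ → K} (hv : span K (range (swap v)) = ⊤) : LinearIndependent K v := by
  classical
  rw [Fintype.linearIndependent_iff]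
  intro t ht j
  have hcols : span K (range (swap v)) ≤ LinearMap.ker (Fintype.linearCombination K t) := by
    rw [span_le]
    rintro _ ⟨p, rfl⟩
    simpa [Fintype.linearCombination_apply, mul_comm, Finset.sum_apply] using congrFun ht p
  have := hcols (hv ▸ mem_top : Pi.single j 1 ∈ span K (range (swap v)))
  simpa [Fintype.linearCombination_apply_single] using this

theorem span_range_mul_pow_eq_top {K : Type*} [Field K] {n : ℕ} {α w : Fin n → K}
    (hα : Injective α) (hw : ∀ j, w j ≠ 0) :
    span K (range fun i : Fin n => w * α ^ (i : ℕ)) = ⊤ := by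
  refine LinearIndependent.span_eq_top_of_card_eq_finrank' ?_ (by simp)
  rw [Fintype.linearIndependent_iff]
  intro t ht
  refine congrFun (Matrix.eq_zero_of_forall_index_sum_mul_pow_eq_zero hα fun j => ?_)
  have := congrFun ht j
  simp only [Finset.sum_apply, Pi.smul_apply, Pi.mul_apply, Pi.pow_apply, smul_eq_mul,
    Pi.zero_apply] at this
  refine (mul_eq_zero.mp ?_).resolve_left (hw j)
  rw [Finset.mul_sum, ← this]
  exact Finset.sum_congr rfl fun i _ => by ring

-- `x_z ⊗ y_z`, with `ℂ² ⊗ ℂ⁴` realised as `Fin 2 × Fin 4 → ℂ`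
noncomputable def productVector (c d e f g h k : ℝ) (z : ℂ) : Fin 2 × Fin 4 → ℂ := fun p =>
  (![1, conj z] : Fin 2 → ℂ) p.1 *
  (![(g : ℂ) * z * (1 - z),
     z * ((h : ℂ) - (c : ℂ) * (d : ℂ) * (z + conj z) + (k : ℂ) * (‖z‖ : ℂ) ^ 2),
     -((e : ℂ) + (f : ℂ) * (‖z‖ : ℂ) ^ 2),
     -(conj z) * ((c : ℂ) + (d : ℂ) * z)] : Fin 4 → ℂ) p.2

theorem conj_sq_mul_pow_mem_span_productVector {ι : Type*} {c d e f g h k r : ℝ} {α : ι → ℂ}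
    (habs : ∀ j, ‖α j‖ = r) (hc : c ≠ 0) (hg : g ≠ 0) (hr : r ≠ 0) (hE : e + f * r ^ 2 ≠ 0)
    (i : Fin 5) :
    (conj ∘ α) ^ 2 * α ^ (i : ℕ) ∈
      span ℂ (range (swap fun j => productVector c d e f g h k (α j))) := by
  set S := span ℂ (range (swap fun j => productVector c d e f g h k (α j)))
  have col (p : Fin 2 × Fin 4) : (fun j => productVector c d e f g h k (α j) p) ∈ S :=
    subset_span ⟨p, rfl⟩
  have hconj (j : ι) : conj (α j) * α j = (r : ℂ) ^ 2 := by
    rw [mul_comm, Complex.mul_conj, ← Complex.sq_norm, habs j]; push_cast; ring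
  have hE' : -((e : ℂ) + f * r ^ 2) ≠ 0 := neg_ne_zero.2 (by exact_mod_cast hE)
  have hr' : (r : ℂ) ≠ 0 := by exact_mod_cast hr
  have hg' : (g : ℂ) ≠ 0 := by exact_mod_cast hg
  have hc' : -(c : ℂ) ≠ 0 := neg_ne_zero.2 (by exact_mod_cast hc)
  have one_mem : 1 ∈ S := by
    refine (S.smul_mem_iff hE').1 ?_
    convert col (0, 2) using 1
    funext j; simp [productVector, habs]
  have conj_mem : conj ∘ α ∈ S := by
    refine (S.smul_mem_iff hE').1 ?_
    convert col (1, 2) using 1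
    funext j; simp [productVector, habs]; ring
  have id_mem : α ∈ S := by
    have hgr : (g : ℂ) * r ^ 2 ≠ 0 := mul_ne_zero hg' (pow_ne_zero 2 hr')
    refine (S.sub_mem_iff_right one_mem).1 ((S.smul_mem_iff hgr).1 ?_)
    convert col (1, 0) using 1
    funext j; simp [productVector]; linear_combination (-(g : ℂ) * (1 - α j)) * hconj j
  have sq_mem : α ^ 2 ∈ S := by
    refine (S.sub_mem_iff_right id_mem).1 ((S.smul_mem_iff hg').1 ?_)
    convert col (0, 0) using 1
    funext j; simp [productVector]; ring
  have conj_sq_mem : (conj ∘ α) ^ 2 ∈ S := by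
    refine (S.smul_mem_iff hc').1 ?_
    convert S.add_mem (col (1, 3)) (S.smul_mem ((d : ℂ) * r ^ 2) conj_mem) using 1
    funext j; simp [productVector]; linear_combination ((d : ℂ) * conj (α j)) * hconj j
  -- for `i = 0, …, 4`, `ᾱ² αⁱ` is `ᾱ²`, `r² ᾱ`, `r⁴`, `r⁴ α`, `r⁴ α²`
  fin_cases i
  · simpa using conj_sq_mem
  · convert S.smul_mem ((r : ℂ) ^ 2) conj_mem using 1
    funext j; simp; linear_combination conj (α j) * hconj j
  · convert S.smul_mem ((r : ℂ) ^ 4) one_mem using 1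
    funext j; simp; linear_combination (conj (α j) * α j + r ^ 2) * hconj j
  · convert S.smul_mem ((r : ℂ) ^ 4) id_mem using 1
    funext j; simp; linear_combination α j * (conj (α j) * α j + r ^ 2) * hconj j
  · convert S.smul_mem ((r : ℂ) ^ 4) sq_mem using 1
    funext j; simp; linear_combination α j ^ 2 * (conj (α j) * α j + r ^ 2) * hconj j

theorem five_product_vectors_linearIndependent_general (a b c d e f g h k : ℝ)
    (ha : 0 < a) (hc : 0 < c) (hd : 0 < d) (hab : 1 < a * b)
    (hg : g = Real.sqrt (a * c * d))
    (he : e = a * (c + d) * c / (a * b - 1))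
    (hf : f = a * (c + d) * d / (a * b - 1))
    (r : ℝ) (hr : 0 < r) (α : Fin 5 → ℂ)
    (habs : ∀ j, ‖α j‖ = r) (hinj : Function.Injective α) :
    LinearIndependent ℂ (fun j : Fin 5 => fun p : Fin 2 × Fin 4 =>
      (![1, starRingEnd ℂ (α j)] : Fin 2 → ℂ) p.1 *
      (![(g : ℂ) * α j * (1 - α j),
         α j * ((h : ℂ) - (c : ℂ) * (d : ℂ) * (α j + starRingEnd ℂ (α j)) +
           (k : ℂ) * (‖α j‖ : ℂ) ^ 2),
         -((e : ℂ) + (f : ℂ) * (‖α j‖ : ℂ) ^ 2),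
         -(starRingEnd ℂ (α j)) * ((c : ℂ) + (d : ℂ) * α j)] : Fin 4 → ℂ) p.2) := by
  have hab' : 0 < a * b - 1 := by linarith
  have hg0 : 0 < g := hg ▸ by positivity
  have hE : 0 < e + f * r ^ 2 := by rw [he, hf]; positivity
  have hconj_sq (j : Fin 5) : conj (α j) ^ 2 ≠ 0 := by
    have : α j ≠ 0 := fun h0 => hr.ne' (by simpa [h0] using (habs j).symm)
    simpa using this
  refine linearIndependent_of_span_range_swap_eq_top
    (v := fun j => productVector c d e f g h k (α j))
    (eq_top_mono ?_ (span_range_mul_pow_eq_top hinj hconj_sq))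
  rw [span_le]
  rintro _ ⟨i, rfl⟩
  exact conj_sq_mul_pow_mem_span_productVector habs hc.ne' hg0.ne' hr.ne' hE.ne' i

/-- Any five product vectors `x_{α_j} ⊗ y_{α_j}` with `|α_j| = r` and the `α_j`
pairwise distinct are linearly independent in `ℂ² ⊗ ℂ⁴`. -/
theorem five_product_vectors_linearIndependent (a b c d e f g h k : ℝ)
    (ha : 0 < a) (hb : 0 < b) (hc : 0 < c) (hd : 0 < d) (hab : 1 < a * b)
    (hg : g = Real.sqrt (a * c * d))
    (he : e = a * (c + d) * c / (a * b - 1))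
    (hf : f = a * (c + d) * d / (a * b - 1))
    (hh : h = b * e - c ^ 2) (hk : k = b * f - d ^ 2)
    (r : ℝ) (hr : 0 < r) (α : Fin 5 → ℂ)
    (habs : ∀ j, ‖α j‖ = r) (hinj : Function.Injective α) :
    LinearIndependent ℂ (fun j : Fin 5 => fun p : Fin 2 × Fin 4 =>
      (![1, starRingEnd ℂ (α j)] : Fin 2 → ℂ) p.1 *
      (![(g : ℂ) * α j * (1 - α j),
         α j * ((h : ℂ) - (c : ℂ) * (d : ℂ) * (α j + starRingEnd ℂ (α j)) +
           (k : ℂ) * (‖α j‖ : ℂ) ^ 2),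
         -((e : ℂ) + (f : ℂ) * (‖α j‖ : ℂ) ^ 2),
         -(starRingEnd ℂ (α j)) * ((c : ℂ) + (d : ℂ) * α j)] : Fin 4 → ℂ) p.2) :=
  five_product_vectors_linearIndependent_general a b c d e f g h k ha hc hd hab hg he hf r hr α habs
    hinj
end
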